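/- Let K ≥ 1, n ≥ K+1 be integers and s ∈ [0,1]. Under the random pruning-edge model, the expectation of |Z| satisfies E(|Z|) ≤ 1 + (n-K-1)·(1-s)^{n-K-1}. -/

import Mathlib

/-! By linearity of expectation, `E|Z| = ∑ v, P(v is uncovered) = ∑ v, (1 - s) ^ c(v)`, where `c(v)`
is the number of potential edges covering `v`. The vertex `K + 1` contributes at most `1`, and every
`v ≥ K + 2` is covered by at least `n - K - 1` potential edges, for instance by the edges
`(min j v - K - 1, max j v)` for `K + 2 ≤ j ≤ n`. -/

open MeasureTheory

/-- Potential pruning edges: pairs `(u,w)` with `1 ≤ u` and `u + K < w ≤ n`. -/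
abbrev EdgeIdx (K n : ℕ) : Type :=
  {p : Fin (n + 1) × Fin (n + 1) // 1 ≤ (p.1 : ℕ) ∧ (p.1 : ℕ) + K < (p.2 : ℕ)}

/-- The pruning edge `e` covers the vertex `v` if `u + K < v ≤ w`. -/
def covers {K n : ℕ} (e : EdgeIdx K n) (v : ℕ) : Prop :=
  (e.1.1 : ℕ) + K < v ∧ v ≤ (e.1.2 : ℕ)

instance {K n : ℕ} (e : EdgeIdx K n) (v : ℕ) : Decidable (covers e v) := by
  unfold covers; infer_instance

/-- The set `Z(ω)` of vertices `v ∈ {K+1, …, n}` covered by no present pruning edge. -/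
def Zset (K n : ℕ) (ω : EdgeIdx K n → Bool) : Finset ℕ :=
  (Finset.Icc (K + 1) n).filter fun v => ∀ e : EdgeIdx K n, ω e = true → ¬ covers e v

/-- The product probability measure on outcomes `ω : EdgeIdx K n → Bool`, where each
potential pruning edge is independently present with probability `s` (for `s ∈ [0,1]`;
the parameter is clamped to `[0,1]`, which is the identity for such `s`). -/
noncomputable def prunMeasure (K n : ℕ) (s : ℝ) : Measure (EdgeIdx K n → Bool) :=
  Measure.pi fun _ =>
    (PMF.bernoulli (min (Real.toNNReal s) 1) (min_le_right _ _)).toMeasure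

open Finset
open scoped NNReal

instance (K n : ℕ) (s : ℝ) : IsProbabilityMeasure (prunMeasure K n s) := by
  unfold prunMeasure; infer_instance

set_option linter.deprecated false in
lemma measureReal_pi_bernoulli_forall_false {ι : Type*} [Fintype ι] (p : ℝ≥0) (hp : p ≤ 1)
    (S : Finset ι) :
    (Measure.pi fun _ : ι => (PMF.bernoulli p hp).toMeasure).real {ω | ∀ i ∈ S, ω i = false}
      = (1 - (p : ℝ)) ^ #S := by
  have hset : {ω : ι → Bool | ∀ i ∈ S, ω i = false} = (S : Set ι).pi fun _ => {false} := by
    ext ω; simp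
  rw [measureReal_def, hset, Measure.pi_pi_finset, prod_const, ENNReal.toReal_pow,
    PMF.toMeasure_apply_singleton _ _ (measurableSet_singleton _), PMF.bernoulli_apply]
  simp [hp]

lemma integral_card_filter {Ω ι : Type*} [MeasurableSpace Ω] (μ : Measure Ω) [IsFiniteMeasure μ]
    (S : Finset ι) (P : ι → Ω → Prop) [∀ i ω, Decidable (P i ω)]
    (hP : ∀ i ∈ S, MeasurableSet {ω | P i ω}) :
    ∫ ω, (#(S.filter (P · ω)) : ℝ) ∂μ = ∑ i ∈ S, μ.real {ω | P i ω} := by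
  have hcard : ∀ ω, (#(S.filter (P · ω)) : ℝ) = ∑ i ∈ S, {ω | P i ω}.indicator 1 ω := by
    intro ω
    simp only [card_filter, Nat.cast_sum, Nat.cast_ite, Nat.cast_one, Nat.cast_zero,
      Set.indicator_apply, Set.mem_ofPred_eq, Pi.one_apply]
  simp_rw [hcard]
  rw [integral_finsetSum _ fun i hi => (integrable_const 1).indicator (hP i hi)]
  exact sum_congr rfl fun i hi => integral_indicator_one (hP i hi)

def coveringEdges (K n v : ℕ) : Finset (EdgeIdx K n) := univ.filter (covers · v)

lemma sub_le_card_coveringEdges {K n v : ℕ} (hv : K + 2 ≤ v) (hvn : v ≤ n) :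
    n - K - 1 ≤ #(coveringEdges K n v) := by
  let f : Icc (K + 2) n → coveringEdges K n v := fun j =>
    have hj := mem_Icc.mp j.2
    ⟨⟨(⟨min (j : ℕ) v - K - 1, by omega⟩, ⟨max (j : ℕ) v, by omega⟩), by dsimp only; omega⟩,
      mem_filter.mpr ⟨mem_univ _, by simp only [covers]; omega⟩⟩
  have hf : Function.Injective f := by
    intro i j h
    have hi := mem_Icc.mp i.2
    have hj := mem_Icc.mp j.2
    simp only [f, Subtype.ext_iff, Prod.ext_iff, Fin.ext_iff] at h
    ext; omega
  have hcard := Fintype.card_le_of_injective f hf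
  simp only [Fintype.card_coe, Nat.card_Icc] at hcard
  omega

lemma prunMeasure_real_uncovered {K n : ℕ} {s : ℝ} (hs0 : 0 ≤ s) (hs1 : s ≤ 1) (v : ℕ) :
    (prunMeasure K n s).real {ω | ∀ e, ω e = true → ¬ covers e v}
      = (1 - s) ^ #(coveringEdges K n v) := by
  have hset : {ω : EdgeIdx K n → Bool | ∀ e, ω e = true → ¬ covers e v}
      = {ω | ∀ e ∈ coveringEdges K n v, ω e = false} := by
    ext ω
    simp only [coveringEdges, mem_filter, mem_univ, true_and, Set.mem_ofPred_eq]
    refine forall_congr' fun e => ?_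
    cases ω e <;> simp
  rw [hset, prunMeasure, measureReal_pi_bernoulli_forall_false,
    min_eq_left (Real.toNNReal_le_one.mpr hs1), Real.coe_toNNReal _ hs0]

theorem stmt3_general (K n : ℕ) (hn : K + 1 ≤ n)
    (s : ℝ) (hs0 : 0 ≤ s) (hs1 : s ≤ 1) :
    ∫ ω, ((Zset K n ω).card : ℝ) ∂(prunMeasure K n s)
      ≤ 1 + ((n - K - 1 : ℕ) : ℝ) * (1 - s) ^ (n - K - 1) := by
  have hbound : ∀ v ∈ Icc (K + 2) n, (1 - s) ^ #(coveringEdges K n v) ≤ (1 - s) ^ (n - K - 1) :=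
    fun v hv => pow_le_pow_of_le_one (by linarith) (by linarith)
      (sub_le_card_coveringEdges (mem_Icc.mp hv).1 (mem_Icc.mp hv).2)
  calc ∫ ω, ((Zset K n ω).card : ℝ) ∂(prunMeasure K n s)
      = ∑ v ∈ Icc (K + 1) n, (1 - s) ^ #(coveringEdges K n v) := by
        rw [← sum_congr rfl fun v _ => prunMeasure_real_uncovered hs0 hs1 v]
        exact integral_card_filter _ _ _ fun _ _ => (Set.toFinite _).measurableSet
    _ = (1 - s) ^ #(coveringEdges K n (K + 1))
          + ∑ v ∈ Icc (K + 2) n, (1 - s) ^ #(coveringEdges K n v) := by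
        rw [← insert_Icc_add_one_left_eq_Icc hn, sum_insert (by simp)]
        rfl
    _ ≤ 1 + #(Icc (K + 2) n) • (1 - s) ^ (n - K - 1) :=
        add_le_add (pow_le_one₀ (by linarith) (by linarith)) (sum_le_card_nsmul _ _ _ hbound)
    _ = 1 + ((n - K - 1 : ℕ) : ℝ) * (1 - s) ^ (n - K - 1) := by
        rw [Nat.card_Icc, nsmul_eq_mul]
        congr 3
        omega

/-- The expectation of `|Z|` is at most `1 + (n-K-1)(1-s)^(n-K-1)`. -/
theorem stmt3 (K n : ℕ) (hK : 1 ≤ K) (hn : K + 1 ≤ n)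
    (s : ℝ) (hs0 : 0 ≤ s) (hs1 : s ≤ 1) :
    ∫ ω, ((Zset K n ω).card : ℝ) ∂(prunMeasure K n s)
      ≤ 1 + ((n - K - 1 : ℕ) : ℝ) * (1 - s) ^ (n - K - 1) :=
  stmt3_general K n hn s hs0 hs1
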